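/- Let f : ℂ → ℂ be entire with Taylor coefficients f_n satisfying Σ_{n≥0} |f_n|² (n!)² 2^{nq} < ∞ for every q ∈ ℕ. Then f is of exponential type zero, i.e., for every ε > 0 there exists C > 0 with |f(z)| ≤ C e^{ε|z|} for all z ∈ ℂ. -/

import Mathlib

/-!
Testing the summability hypothesis at the exponent `2q` bounds `|fₙ| n! 2^{nq}` uniformly in `n`,
so `|f(z)|` is dominated by a multiple of the exponential series at `|z| / 2^q`. Since `q` is
arbitrary, the exponent `|z| / 2^q` beats every `ε |z|`.
-/

open Nat Real

theorem Real.hasSum_pow_div_factorial (x : ℝ) : HasSum (fun n ↦ x ^ n / n !) (exp x) := by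
  rw [exp_eq_exp_ℝ]
  exact NormedSpace.expSeries_div_hasSum_exp x

theorem norm_tsum_mul_pow_le_mul_exp {𝕜 : Type*} [NormedDivisionRing 𝕜] (c : ℕ → 𝕜)
    {B R : ℝ} (hR : 0 < R) (hc : ∀ n, ‖c n‖ * n ! * R ^ n ≤ B) (z : 𝕜) :
    ‖∑' n, c n * z ^ n‖ ≤ B * exp (‖z‖ / R) := by
  refine tsum_of_norm_bounded ((hasSum_pow_div_factorial _).mul_left B) fun n ↦ ?_
  have hpos : (0 : ℝ) < n ! * R ^ n := by positivity
  calc ‖c n * z ^ n‖ = ‖c n‖ * (n ! * R ^ n) * ((‖z‖ / R) ^ n / n !) := by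
        rw [norm_mul, norm_pow, div_pow]
        field_simp
    _ ≤ B * ((‖z‖ / R) ^ n / n !) := by
        gcongr
        simpa only [mul_assoc] using hc n

theorem norm_mul_factorial_mul_two_pow_le_sqrt {c : ℕ → ℂ} {q : ℕ}
    (h : Summable fun n : ℕ ↦ ‖c n‖ ^ 2 * (n ! : ℝ) ^ 2 * 2 ^ (n * (2 * q))) (n : ℕ) :
    ‖c n‖ * n ! * (2 ^ q) ^ n ≤ √(∑' m : ℕ, ‖c m‖ ^ 2 * (m ! : ℝ) ^ 2 * 2 ^ (m * (2 * q))) := by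
  refine le_sqrt_of_sq_le (le_of_eq_of_le ?_ (h.le_tsum n fun m _ ↦ by positivity))
  ring

/-- if the Taylor coefficients of an entire function satisfy
`Σ |fₙ|²(n!)²2^{nq} < ∞` for every `q`, then the function is of first order of growth
and minimal type (exponential type zero). -/
theorem stmt17 (c : ℕ → ℂ)
    (hsum : ∀ q : ℕ, Summable (fun n : ℕ => ‖c n‖ ^ 2 * (n.factorial : ℝ) ^ 2 * 2 ^ (n * q))) :
    ∀ ε : ℝ, 0 < ε → ∃ C : ℝ, 0 < C ∧
      ∀ z : ℂ, ‖∑' n : ℕ, c n * z ^ n‖ ≤ C * Real.exp (ε * ‖z‖) := by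
  intro ε hε
  obtain ⟨q, hq⟩ := pow_unbounded_of_one_lt ε⁻¹ one_lt_two
  have hqε : ((2 : ℝ) ^ q)⁻¹ ≤ ε := inv_le_of_inv_le₀ hε hq.le
  set B := √(∑' m : ℕ, ‖c m‖ ^ 2 * (m ! : ℝ) ^ 2 * 2 ^ (m * (2 * q)))
  refine ⟨B + 1, by positivity, fun z ↦ ?_⟩
  calc ‖∑' n, c n * z ^ n‖
      ≤ B * exp (‖z‖ / 2 ^ q) :=
        norm_tsum_mul_pow_le_mul_exp c (by positivity)
          (norm_mul_factorial_mul_two_pow_le_sqrt (hsum (2 * q))) z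
    _ ≤ (B + 1) * exp (ε * ‖z‖) := by
        gcongr
        · linarith
        · rw [div_eq_inv_mul]
          gcongr
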